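/- arXiv:2011.08287 — 2 statements merged into one kernel-verified Lean document; each statement's English description precedes it below -/
import Mathlib

section
/- Every element of the Clifford group Γ (invertible elements T with T C^1 T^{-1} ⊆ C^1) preserves each homogeneous subspace C^k under conjugation: for all k = 0,1,…,n, T C^k T^{-1} ⊆ C^k. Consequently Γ = ∩_{k=0}^n Γ^k. -/
open CliffordAlgebra

noncomputable section

variable {n : ℕ} (Q : QuadraticForm ℝ (Fin n → ℝ))

/-- The standard generators `e_a` of the Clifford algebra. -/
def egen (a : Fin n) : CliffordAlgebra Q := ι Q (Pi.single a 1)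

/-- The ordered product of generators indexed by a finite set. -/
def eProd (s : Finset (Fin n)) : CliffordAlgebra Q :=
  ((s.sort (· ≤ ·)).map (egen Q)).prod

/-- The grade-`k` subspace `C^k`, spanned by the products of `k` distinct generators. -/
def gradeSubmodule (k : ℕ) : Submodule ℝ (CliffordAlgebra Q) :=
  Submodule.span ℝ {x | ∃ s : Finset (Fin n), s.card = k ∧ x = eProd Q s}

/-- The set `Z^× (C^{×(0)} ∪ C^{×(1)})` : invertible central elements times
invertible even or odd elements. -/
def Pset : Set (CliffordAlgebra Q) :=
  {T | ∃ W T₀ : CliffordAlgebra Q,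
    W ∈ Subalgebra.center ℝ (CliffordAlgebra Q) ∧ IsUnit W ∧
    (T₀ ∈ evenOdd Q 0 ∨ T₀ ∈ evenOdd Q 1) ∧ IsUnit T₀ ∧ T = W * T₀}

/-- `Q` is diagonal with entries `±1` in the standard basis (an orthonormal-type basis,
expressing nondegeneracy of `Q`). -/
def DiagQ : Prop :=
  (∀ a, Q (Pi.single a 1) = 1 ∨ Q (Pi.single a 1) = -1) ∧
  (∀ a b : Fin n, a ≠ b → QuadraticMap.polar Q (Pi.single a 1) (Pi.single b 1) = 0)

/-!
If `φ` is an algebra endomorphism of `C` with `φ(C¹) ⊆ C¹` (for instance conjugation by an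
element of `Γ`), the images `φ(e_a)` are pairwise anticommuting vectors. For a vector `x` and
`M ∈ Cᵐ`, the combination `x M + (-1)ᵐ M x` always lies in `Cᵐ⁺¹` (on basis blades it is either
`0` or `2 e_a e_s`); when `x` anticommutes with the factors of `M` it equals `2 x M`. Induction on
the number of factors then gives `φ(e_s) ∈ C^{|s|}`. The converse is the case `k = 1`, or
trivial when `n = 0` since then `C¹ = 0`.
-/

section

variable {Q}

lemma egen_mul_egen_of_ne (hQ : DiagQ Q) {a b : Fin n} (h : a ≠ b) :
    egen Q a * egen Q b = -(egen Q b * egen Q a) := by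
  have h2 := ι_mul_ι_add_swap (Q := Q) (Pi.single a 1) (Pi.single b 1)
  rw [hQ.2 a b h, map_zero] at h2
  exact eq_neg_of_add_eq_zero_left h2

lemma eProd_insert_of_forall_lt {b : Fin n} {s : Finset (Fin n)} (hb : ∀ c ∈ s, b < c) :
    eProd Q (insert b s) = egen Q b * eProd Q s := by
  rw [eProd, Finset.sort_insert _ (fun c hc => (hb c hc).le) fun h => lt_irrefl b (hb b h)]
  rfl

lemma eProd_mem_gradeSubmodule (s : Finset (Fin n)) : eProd Q s ∈ gradeSubmodule Q s.card :=
  Submodule.subset_span ⟨s, rfl, rfl⟩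

lemma gradeSubmodule_eq_bot_of_lt {k : ℕ} (hk : n < k) : gradeSubmodule Q k = ⊥ := by
  rw [gradeSubmodule, Submodule.span_eq_bot]
  rintro _ ⟨s, rfl, -⟩
  exact absurd hk (card_finset_fin_le s).not_gt

lemma egen_mul_eProd (hQ : DiagQ Q) (a : Fin n) (s : Finset (Fin n)) :
    egen Q a * eProd Q s = (-1 : ℝ) ^ (s.erase a).card • (eProd Q s * egen Q a) := by
  induction s using Finset.induction_on_min with
  | empty => simp [eProd]
  | insert b t hb ih =>
    rw [eProd_insert_of_forall_lt hb]
    obtain rfl | hab := eq_or_ne a b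
    · rw [Finset.erase_insert_eq_erase, mul_assoc (egen Q a) (eProd Q t), ← mul_smul_comm, ← ih]
    · have hbt : b ∉ t.erase a := fun h => lt_irrefl b (hb b (Finset.mem_of_mem_erase h))
      rw [Finset.erase_insert_of_ne hab.symm, Finset.card_insert_of_notMem hbt, ← mul_assoc,
        egen_mul_egen_of_ne hQ hab, neg_mul, mul_assoc, ih, mul_smul_comm, pow_succ, mul_neg_one,
        neg_smul, mul_assoc]

lemma exists_egen_mul_eProd_eq_smul_eProd_insert (hQ : DiagQ Q) {a : Fin n} {s : Finset (Fin n)}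
    (ha : a ∉ s) : ∃ k : ℕ, egen Q a * eProd Q s = (-1 : ℝ) ^ k • eProd Q (insert a s) := by
  induction s using Finset.induction_on_min with
  | empty => exact ⟨0, by simp [eProd]⟩
  | insert b t hb ih =>
    obtain ⟨hab, hat⟩ : a ≠ b ∧ a ∉ t := by simpa using ha
    obtain hlt | hgt := hab.lt_or_gt
    · refine ⟨0, ?_⟩
      rw [pow_zero, one_smul, eProd_insert_of_forall_lt
        (Finset.forall_mem_insert .. |>.2 ⟨hlt, fun c hc => hlt.trans (hb c hc)⟩)]
    · obtain ⟨k, hk⟩ := ih hat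
      refine ⟨k + 1, ?_⟩
      rw [Finset.insert_comm, eProd_insert_of_forall_lt hb,
        eProd_insert_of_forall_lt (Finset.forall_mem_insert .. |>.2 ⟨hgt, hb⟩), ← mul_assoc,
        egen_mul_egen_of_ne hQ hab, neg_mul, mul_assoc, hk, mul_smul_comm, pow_succ, mul_neg_one,
        neg_smul]

/-- For `x ∈ C¹` this is the grade-`(m+1)` part of `x M`, the "outer product" `x ∧ M`. -/
lemma mul_add_neg_one_pow_smul_mul_mem (hQ : DiagQ Q) {m : ℕ} {x M : CliffordAlgebra Q}
    (hx : x ∈ gradeSubmodule Q 1) (hM : M ∈ gradeSubmodule Q m) :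
    x * M + (-1 : ℝ) ^ m • (M * x) ∈ gradeSubmodule Q (m + 1) := by
  let B := LinearMap.mul ℝ (CliffordAlgebra Q) + (-1 : ℝ) ^ m • (LinearMap.mul ℝ _).flip
  have hB := Submodule.apply_mem_map₂ B hx hM
  rw [gradeSubmodule, gradeSubmodule, Submodule.map₂_span_span] at hB
  refine Submodule.span_le.2 ?_ hB
  rintro _ ⟨_, ⟨t, ht, rfl⟩, _, ⟨s, rfl, rfl⟩, rfl⟩
  obtain ⟨a, rfl⟩ := Finset.card_eq_one.1 ht
  have hea : eProd Q {a} = egen Q a := by simp [eProd]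
  simp only [SetLike.mem_coe, B, LinearMap.add_apply, LinearMap.smul_apply, LinearMap.flip_apply,
    LinearMap.mul_apply', hea]
  by_cases ha : a ∈ s
  · rw [egen_mul_eProd hQ, ← Finset.card_erase_add_one ha, pow_succ, mul_neg_one, neg_smul,
      add_neg_cancel]
    exact zero_mem _
  · obtain ⟨k, hk⟩ := exists_egen_mul_eProd_eq_smul_eProd_insert hQ ha
    have hcomm := egen_mul_eProd hQ a s
    rw [Finset.erase_eq_of_notMem ha] at hcomm
    rw [← hcomm, hk, ← two_smul ℝ, smul_smul, ← Finset.card_insert_of_notMem ha]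
    exact Submodule.smul_mem _ _ (eProd_mem_gradeSubmodule _)

lemma mul_mem_gradeSubmodule_of_mul_eq (hQ : DiagQ Q) {m : ℕ} {x M : CliffordAlgebra Q}
    (hx : x ∈ gradeSubmodule Q 1) (hM : M ∈ gradeSubmodule Q m)
    (hxM : x * M = (-1 : ℝ) ^ m • (M * x)) : x * M ∈ gradeSubmodule Q (m + 1) := by
  have h := Submodule.smul_mem _ (2⁻¹ : ℝ) (mul_add_neg_one_pow_smul_mul_mem hQ hx hM)
  rwa [← hxM, ← two_smul ℝ, smul_smul, inv_mul_cancel₀ two_ne_zero, one_smul] at h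

theorem AlgHom.mapsTo_gradeSubmodule (hQ : DiagQ Q)
    (φ : CliffordAlgebra Q →ₐ[ℝ] CliffordAlgebra Q)
    (hφ : Set.MapsTo φ (gradeSubmodule Q 1) (gradeSubmodule Q 1)) (k : ℕ) :
    Set.MapsTo φ (gradeSubmodule Q k) (gradeSubmodule Q k) := by
  suffices h : ∀ s : Finset (Fin n), φ (eProd Q s) ∈ gradeSubmodule Q s.card by
    refine fun x hx => (Submodule.span_le (p := (gradeSubmodule Q k).comap φ.toLinearMap)).2 ?_ hx
    rintro _ ⟨s, rfl, rfl⟩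
    exact h s
  intro s
  induction s using Finset.induction_on_min with
  | empty => simpa [eProd] using eProd_mem_gradeSubmodule (Q := Q) ∅
  | insert b t hb ih =>
    have hbt : b ∉ t := fun h => lt_irrefl b (hb b h)
    rw [eProd_insert_of_forall_lt hb, map_mul, Finset.card_insert_of_notMem hbt]
    have hb₁ : egen Q b ∈ gradeSubmodule Q 1 := by
      simpa [eProd] using eProd_mem_gradeSubmodule (Q := Q) {b}
    refine mul_mem_gradeSubmodule_of_mul_eq hQ (hφ hb₁) ih ?_
    rw [← map_mul, egen_mul_eProd hQ, Finset.erase_eq_of_notMem hbt, map_smul, map_mul]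

end

/-- The Clifford group preserves every homogeneous subspace: `Γ = ⋂_k Γ^k`. -/
theorem stmt2 (hQ : DiagQ Q) (T : (CliffordAlgebra Q)ˣ) :
    (∀ U ∈ gradeSubmodule Q 1,
        (↑T : CliffordAlgebra Q) * U * (↑T⁻¹ : CliffordAlgebra Q) ∈ gradeSubmodule Q 1) ↔
      (∀ k, k ≤ n → ∀ U ∈ gradeSubmodule Q k,
        (↑T : CliffordAlgebra Q) * U * (↑T⁻¹ : CliffordAlgebra Q) ∈ gradeSubmodule Q k) := by
  let φ := MulSemiringAction.toAlgEquiv ℝ (CliffordAlgebra Q) (ConjAct.toConjAct T)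
  have hφ (x : CliffordAlgebra Q) : φ x = T * x * ↑T⁻¹ := ConjAct.units_smul_def _ x
  constructor
  · intro h1 k _ U hU
    simp only [← hφ] at h1 ⊢
    exact φ.toAlgHom.mapsTo_gradeSubmodule hQ h1 k hU
  · intro h U hU
    obtain hn | hn := Nat.lt_or_ge n 1
    · rw [gradeSubmodule_eq_bot_of_lt hn, Submodule.mem_bot] at hU ⊢
      simp [hU]
    · exact h 1 hn U hU
end
end

section
/- In a Clifford algebra with n ≤ 3 generators and nondegenerate form, any invertible T with reverse(T)·T ∈ Z^× satisfies T C^1 T^{-1} ⊆ C^1; thus A ⊆ Γ (and hence A = Q = P) for n ≤ 3. -/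
open CliffordAlgebra

noncomputable section

variable {n : ℕ} (Q : QuadraticForm ℝ (Fin n → ℝ))

/-!
Conjugation by `T` commutes with reversion up to the central factor `reverse T * T`, so it sends a
vector `U` to a reversion-fixed element `M = T U T⁻¹`. Reversion multiplies a product of `k`
orthogonal generators by `(-1)^(k choose 2)`, which is `-1` for `k = 2, 3`; hence for `n ≤ 3` a
reversion-fixed element is a scalar plus a vector, `M = c + v`. Now `M² = T U² T⁻¹ = Q U` is a
scalar while `(c + v)² = c² + Q v + 2 c v`, so the odd part `2 c v` vanishes. If `c = 0` then
`M = v` is a vector; if `v = 0` then `U = T⁻¹ M T` is a scalar and a vector at once, so `U = 0`.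
-/

open Function

section General

variable {R M : Type*} [CommRing R] [AddCommGroup M] [Module R M] {Q : QuadraticForm R M}

theorem reverse_conj_eq_self (T : (CliffordAlgebra Q)ˣ)
    (hT : reverse (T : CliffordAlgebra Q) * T ∈ Subalgebra.center R (CliffordAlgebra Q))
    {x : CliffordAlgebra Q} (hx : reverse x = x) :
    reverse (↑T * x * ↑T⁻¹ : CliffordAlgebra Q) = ↑T * x * ↑T⁻¹ := by
  have hTinv : reverse (↑T⁻¹ : CliffordAlgebra Q) * reverse ↑T = 1 := by
    rw [← reverse.map_mul, T.mul_inv, reverse.map_one]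
  rw [reverse.map_mul, reverse.map_mul, hx, ← Units.mul_left_inj T, Units.inv_mul_cancel_right]
  calc reverse (↑T⁻¹ : CliffordAlgebra Q) * (x * reverse ↑T) * ↑T
      = reverse (↑T⁻¹ : CliffordAlgebra Q) * (x * (reverse ↑T * ↑T)) := by
        simp only [mul_assoc]
    _ = reverse (↑T⁻¹ : CliffordAlgebra Q) * reverse ↑T * ↑T * x := by
        rw [Subalgebra.mem_center_iff.mp hT x]; simp only [mul_assoc]
    _ = ↑T * x := by rw [hTinv, one_mul]

theorem disjoint_one_range_ι :
    Disjoint (1 : Submodule R (CliffordAlgebra Q)) (LinearMap.range (ι Q)) :=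
  (evenOdd_isCompl Q).disjoint.mono (one_le_evenOdd_zero Q) (range_ι_le_evenOdd_one Q)

end General

section Field

variable {R M : Type*} [Field R] [NeZero (2 : R)] [AddCommGroup M] [Module R M]
  {Q : QuadraticForm R M}

theorem mem_one_or_mem_range_ι_of_mul_self_mem_one {x : CliffordAlgebra Q}
    (hx : x ∈ 1 ⊔ LinearMap.range (ι Q)) (hsq : x * x ∈ (1 : Submodule R (CliffordAlgebra Q))) :
    x ∈ (1 : Submodule R (CliffordAlgebra Q)) ∨ x ∈ LinearMap.range (ι Q) := by
  obtain ⟨_, hc, _, ⟨v, rfl⟩, rfl⟩ := Submodule.mem_sup.mp hx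
  obtain ⟨c, rfl⟩ := Submodule.mem_one.mp hc
  have hexpand : (algebraMap R _ c + ι Q v) * (algebraMap R _ c + ι Q v)
      = algebraMap R _ (c * c + Q v) + (2 * c) • ι Q v := by
    simp only [add_mul, mul_add, ι_sq_scalar, map_add, map_mul, ← Algebra.commutes c (ι Q v),
      ← Algebra.smul_def, mul_smul, two_smul]
    abel
  have hcross : (2 * c) • ι Q v = 0 := by
    refine Submodule.disjoint_def.mp disjoint_one_range_ι _ ?_ (Submodule.smul_mem _ _ ⟨v, rfl⟩)
    rw [← add_sub_cancel_left (algebraMap R _ (c * c + Q v)) ((2 * c) • ι Q v), ← hexpand]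
    exact sub_mem hsq (Submodule.mem_one.mpr ⟨_, rfl⟩)
  rcases smul_eq_zero.mp hcross with hc | hv
  · right
    rw [(mul_eq_zero.mp hc).resolve_left two_ne_zero, map_zero, zero_add]
    exact ⟨v, rfl⟩
  · left
    rw [hv, add_zero]
    exact Submodule.mem_one.mpr ⟨c, rfl⟩

end Field

theorem mem_one_of_conj_mem_one {R A : Type*} [CommSemiring R] [Semiring A] [Algebra R A]
    (T : Aˣ) {x : A} (h : ↑T * x * ↑T⁻¹ ∈ (1 : Submodule R A)) : x ∈ (1 : Submodule R A) := by
  obtain ⟨c, hc⟩ := Submodule.mem_one.mp h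
  refine Submodule.mem_one.mpr ⟨c, ?_⟩
  calc algebraMap R A c = ↑T⁻¹ * (algebraMap R A c * ↑T) := by
        rw [Algebra.commutes, T.inv_mul_cancel_left]
    _ = x := by rw [hc]; simp [mul_assoc]

open scoped symmDiff

theorem Finset.singleton_symmDiff_of_notMem {α : Type*} [DecidableEq α] {a : α} {s : Finset α}
    (h : a ∉ s) : {a} ∆ s = insert a s := by
  ext x
  by_cases hx : x = a <;> simp [Finset.mem_symmDiff, hx, h]

theorem Finset.singleton_symmDiff_of_mem {α : Type*} [DecidableEq α] {a : α} {s : Finset α}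
    (h : a ∈ s) : {a} ∆ s = s.erase a := by
  ext x
  by_cases hx : x = a <;> simp [Finset.mem_symmDiff, hx, h]

theorem Finset.singleton_symmDiff_insert_of_ne {α : Type*} [DecidableEq α] {a b : α}
    {s : Finset α} (h : a ≠ b) : {a} ∆ insert b s = insert b ({a} ∆ s) := by
  ext x
  by_cases hx : x = b <;> simp [Finset.mem_symmDiff, hx, h.symm]

section Generators

variable {Q}

theorem DiagQ.pairwise_isOrtho (hQ : DiagQ Q) :
    Pairwise (Q.IsOrtho on fun a : Fin n => Pi.single a 1) :=
  fun a b hab => QuadraticMap.isOrtho_polarBilin.mp (hQ.2 a b hab)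

theorem ι_eq_sum_egen (m : Fin n → ℝ) : ι Q m = ∑ a, m a • egen Q a := by
  simp only [egen, ← map_smul, ← map_sum]
  congr 1
  ext b
  simp [Pi.single_apply]

theorem egen_mul_self (a : Fin n) : egen Q a * egen Q a = algebraMap ℝ _ (Q (Pi.single a 1)) :=
  ι_sq_scalar Q _

theorem egen_mul_egen_comm (hQ : Pairwise (Q.IsOrtho on fun a : Fin n => Pi.single a 1))
    {a b : Fin n} (hab : a ≠ b) : egen Q a * egen Q b = -(egen Q b * egen Q a) :=
  ι_mul_ι_comm_of_isOrtho (hQ hab)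

theorem eProd_empty : eProd Q ∅ = 1 := by
  simp [eProd]

theorem eProd_singleton (a : Fin n) : eProd Q {a} = egen Q a := by
  simp [eProd]

theorem eProd_insert_of_lt {a : Fin n} {s : Finset (Fin n)} (h : ∀ x ∈ s, a < x) :
    eProd Q (insert a s) = egen Q a * eProd Q s := by
  rw [eProd, Finset.sort_insert (· ≤ ·) (fun b hb => (h b hb).le) fun ha => lt_irrefl a (h a ha)]
  simp [eProd]

theorem egen_mul_eProd_s18 (hQ : Pairwise (Q.IsOrtho on fun a : Fin n => Pi.single a 1))
    (a : Fin n) (s : Finset (Fin n)) : ∃ c : ℝ, egen Q a * eProd Q s = c • eProd Q ({a} ∆ s) := by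
  induction s using Finset.induction_on_min generalizing a with
  | empty =>
    refine ⟨1, ?_⟩
    rw [Finset.singleton_symmDiff_of_notMem (Finset.notMem_empty a), one_smul, eProd_empty, mul_one,
      insert_empty_eq, eProd_singleton]
  | insert b t hbt ih =>
    have hbt' : b ∉ t := fun hb => lt_irrefl b (hbt b hb)
    rcases lt_trichotomy a b with hab | rfl | hba
    · have hat : ∀ x ∈ insert b t, a < x := by
        simpa [hab] using fun x hx => hab.trans (hbt x hx)
      refine ⟨1, ?_⟩
      rw [one_smul, ← eProd_insert_of_lt hat, Finset.singleton_symmDiff_of_notMem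
        (fun ha => lt_irrefl a (hat a ha))]
    · refine ⟨Q (Pi.single a 1), ?_⟩
      rw [eProd_insert_of_lt hbt, ← mul_assoc, egen_mul_self, ← Algebra.smul_def,
        Finset.singleton_symmDiff_of_mem (Finset.mem_insert_self a t), Finset.erase_insert hbt']
    · obtain ⟨c, hc⟩ := ih a
      have hbs : ∀ x ∈ {a} ∆ t, b < x := by
        intro x hx
        rcases Finset.mem_symmDiff.mp hx with ⟨hx, -⟩ | ⟨hx, -⟩
        · rwa [Finset.mem_singleton.mp hx]
        · exact hbt x hx
      refine ⟨-c, ?_⟩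
      rw [eProd_insert_of_lt hbt, ← mul_assoc, egen_mul_egen_comm hQ hba.ne', neg_mul, mul_assoc,
        hc, mul_smul_comm, ← eProd_insert_of_lt hbs, neg_smul,
        Finset.singleton_symmDiff_insert_of_ne hba.ne']

theorem span_range_eProd
    (hQ : Pairwise (Q.IsOrtho on fun a : Fin n => Pi.single a 1)) :
    Submodule.span ℝ (Set.range (eProd Q)) = ⊤ := by
  set E := Submodule.span ℝ (Set.range (eProd Q))
  have hmul (a : Fin n) : E ≤ E.comap (LinearMap.mulLeft ℝ (egen Q a)) :=
    Submodule.span_le.mpr <| Set.range_subset_iff.mpr fun s => by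
      obtain ⟨c, hc⟩ := egen_mul_eProd_s18 hQ a s
      simpa [hc] using E.smul_mem c (Submodule.subset_span ⟨_, rfl⟩)
  refine Submodule.eq_top_iff'.mpr fun x => ?_
  induction x using CliffordAlgebra.left_induction with
  | algebraMap r =>
    rw [Algebra.algebraMap_eq_smul_one, ← eProd_empty]
    exact E.smul_mem r (Submodule.subset_span ⟨_, rfl⟩)
  | add x y hx hy => exact E.add_mem hx hy
  | ι_mul x m hx =>
    rw [ι_eq_sum_egen, Finset.sum_mul]
    exact E.sum_mem fun a _ => by rw [smul_mul_assoc]; exact E.smul_mem _ (hmul a hx)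

theorem gradeSubmodule_one : gradeSubmodule Q 1 = LinearMap.range (ι Q) := by
  apply le_antisymm
  · refine Submodule.span_le.mpr ?_
    rintro _ ⟨s, hs, rfl⟩
    obtain ⟨a, rfl⟩ := Finset.card_eq_one.mp hs
    exact ⟨Pi.single a 1, (eProd_singleton a).symm⟩
  · rintro _ ⟨m, rfl⟩
    rw [ι_eq_sum_egen]
    exact Submodule.sum_mem _ fun a _ => Submodule.smul_mem _ _ <|
      Submodule.subset_span ⟨{a}, Finset.card_singleton a, (eProd_singleton a).symm⟩

theorem eProd_mul_egen_of_notMem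
    (hQ : Pairwise (Q.IsOrtho on fun a : Fin n => Pi.single a 1))
    {a : Fin n} {s : Finset (Fin n)} (ha : a ∉ s) :
    eProd Q s * egen Q a = (-1 : ℝ) ^ s.card • (egen Q a * eProd Q s) := by
  induction s using Finset.induction_on_min with
  | empty => simp [eProd_empty]
  | insert b t hbt ih =>
    obtain ⟨hab, hat⟩ : a ≠ b ∧ a ∉ t := by simpa using ha
    rw [eProd_insert_of_lt hbt, mul_assoc, ih hat, mul_smul_comm, ← mul_assoc,
      egen_mul_egen_comm hQ hab.symm, Finset.card_insert_of_notMem fun hb => lt_irrefl b (hbt b hb),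
      pow_succ, mul_smul, neg_mul, smul_neg, neg_one_smul, smul_neg, mul_assoc]

theorem reverse_eProd (hQ : Pairwise (Q.IsOrtho on fun a : Fin n => Pi.single a 1))
    (s : Finset (Fin n)) :
    reverse (eProd Q s) = (-1 : ℝ) ^ s.card.choose 2 • eProd Q s := by
  induction s using Finset.induction_on_min with
  | empty => simp [eProd_empty]
  | insert a s has ih =>
    have ha : a ∉ s := fun h => lt_irrefl a (has a h)
    rw [eProd_insert_of_lt has, reverse.map_mul, ih, egen, reverse_ι, ← egen, smul_mul_assoc,
      eProd_mul_egen_of_notMem hQ ha, smul_smul, Finset.card_insert_of_notMem ha,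
      Nat.choose_succ_succ', Nat.choose_one_right, pow_add, mul_comm]

theorem eProd_add_reverse_mem
    (hQ : Pairwise (Q.IsOrtho on fun a : Fin n => Pi.single a 1)) (hn : n ≤ 3)
    (s : Finset (Fin n)) :
    eProd Q s + reverse (eProd Q s) ∈ 1 ⊔ LinearMap.range (ι Q) := by
  have hcard : s.card ≤ 3 := (Finset.card_le_univ s).trans (by simpa using hn)
  rw [reverse_eProd hQ]
  interval_cases h : s.card
  · rw [Finset.card_eq_zero.mp h, eProd_empty]
    exact Submodule.mem_sup_left (Submodule.mem_one.mpr ⟨1 + 1, by simp⟩)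
  · obtain ⟨a, rfl⟩ := Finset.card_eq_one.mp h
    have he : eProd Q {a} ∈ LinearMap.range (ι Q) := ⟨_, (eProd_singleton a).symm⟩
    norm_num
    exact Submodule.mem_sup_right (add_mem he he)
  all_goals norm_num

theorem mem_one_sup_range_ι_of_reverse_eq_self
    (hQ : Pairwise (Q.IsOrtho on fun a : Fin n => Pi.single a 1)) (hn : n ≤ 3)
    {x : CliffordAlgebra Q} (hx : reverse x = x) :
    x ∈ 1 ⊔ LinearMap.range (ι Q) := by
  set L : Submodule ℝ (CliffordAlgebra Q) := 1 ⊔ LinearMap.range (ι Q)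
  have hle : Submodule.span ℝ (Set.range (eProd Q)) ≤ L.comap (LinearMap.id + reverse) :=
    Submodule.span_le.mpr <| Set.range_subset_iff.mpr (eProd_add_reverse_mem hQ hn)
  have h2x : x + reverse x ∈ L := hle (span_range_eProd hQ ▸ Submodule.mem_top)
  rw [hx, ← two_smul ℝ x] at h2x
  simpa using L.smul_mem (2⁻¹ : ℝ) h2x

end Generators

/-- `A ⊆ Γ` for `n ≤ 3`: if `reverse(T) * T` is an invertible central element, then
conjugation by `T` preserves `C^1`. -/
theorem stmt18 (hQ : DiagQ Q) (hn : n ≤ 3) (T : (CliffordAlgebra Q)ˣ)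
    (hc : reverse (Q := Q) (↑T : CliffordAlgebra Q) * ↑T ∈
      Subalgebra.center ℝ (CliffordAlgebra Q)) :
    ∀ U ∈ gradeSubmodule Q 1,
      (↑T : CliffordAlgebra Q) * U * (↑T⁻¹ : CliffordAlgebra Q) ∈ gradeSubmodule Q 1 := by
  intro U hU
  rw [gradeSubmodule_one] at hU ⊢
  obtain ⟨m, rfl⟩ := hU
  have hsq : (↑T * ι Q m * ↑T⁻¹) * (↑T * ι Q m * ↑T⁻¹) ∈ (1 : Submodule ℝ (CliffordAlgebra Q)) :=
    Submodule.mem_one.mpr ⟨Q m, by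
      simp only [mul_assoc, Units.inv_mul_cancel_left]
      rw [← mul_assoc (ι Q m), ι_sq_scalar, ← mul_assoc, ← Algebra.commutes,
        Units.mul_inv_cancel_right]⟩
  rcases mem_one_or_mem_range_ι_of_mul_self_mem_one
    (mem_one_sup_range_ι_of_reverse_eq_self hQ.pairwise_isOrtho hn
      (reverse_conj_eq_self T hc (reverse_ι m))) hsq with hM | hM
  · rw [Submodule.disjoint_def.mp disjoint_one_range_ι _ (mem_one_of_conj_mem_one T hM) ⟨m, rfl⟩,
      mul_zero, zero_mul]
    exact zero_mem _
  · exact hM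
end
end
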